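/- (Supergradient of the square-loss dual.) Let α ∈ ℝⁿ satisfy |η_j(α)| ≠ η₀ for every j ∈ {1,…,p}, and let β(α) ∈ ℝᵖ be defined by β(α)_j = 𝔅(η_j(α)). Then the vector X·β(α) − y − α is a supergradient of D at α: for every α′ ∈ ℝⁿ, D(α′) ≤ D(α) + ⟨X·β(α) − y − α, α′ − α⟩. -/

import Mathlib

/-!
For `b ∈ ℝ` let `ψ(b) = λ₀·[b ≠ 0] + λ₁|b| + λ₂b²` be the penalty of the primal problem. Completing
the square in `|b|` shows that `Φ(τ) = min_b (ψ(b) + τ b)`, the minimum being attained at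
`b = 𝔅(−τ/(2λ₂))`. Hence `Φ` is an infimum of affine functions of `τ`, and the minimiser at `τ` is a
supergradient of `Φ` there: `Φ(τ') ≤ ψ(b) + τ' b = Φ(τ) + b (τ' − τ)`. The remaining part of `D` is
the concave quadratic `−½‖α‖² − yᵀα`, whose gradient is `−α − y`; summing over the columns of `X`
gives the supergradient `Xβ(α) − y − α`.
-/

open Finset

namespace L0L1L2

variable {l0 l1 l2 : ℝ}

noncomputable def penalty (l0 l1 l2 b : ℝ) : ℝ :=
  (if b = 0 then 0 else l0) + l1 * |b| + l2 * b ^ 2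

noncomputable def dualPhi (l0 l1 l2 τ : ℝ) : ℝ :=
  if 2 * Real.sqrt (l0 * l2) + l1 < |τ| then l0 - (|τ| - l1) ^ 2 / (4 * l2) else 0

noncomputable def hardThreshold (l0 l1 l2 η : ℝ) : ℝ :=
  if (2 * Real.sqrt (l0 * l2) + l1) / (2 * l2) < |η| then Real.sign η * (|η| - l1 / (2 * l2))
  else 0

theorem dualPhi_nonpos (hl0 : 0 ≤ l0) (hl2 : 0 < l2) (τ : ℝ) : dualPhi l0 l1 l2 τ ≤ 0 := by
  unfold dualPhi
  split_ifs with hτ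
  · have hm := Real.sqrt_nonneg (l0 * l2)
    rw [sub_nonpos, le_div_iff₀ (by positivity)]
    nlinarith [Real.sq_sqrt (mul_nonneg hl0 hl2.le)]
  · exact le_rfl

theorem dualPhi_le_penalty_add_mul (hl0 : 0 ≤ l0) (hl2 : 0 < l2) (τ b : ℝ) :
    dualPhi l0 l1 l2 τ ≤ penalty l0 l1 l2 b + τ * b := by
  by_cases hb : b = 0
  · simpa [penalty, hb] using dualPhi_nonpos hl0 hl2 τ
  set s := |b|
  have hs : 0 < s := abs_pos.mpr hb
  have hτb : -(|τ| * s) ≤ τ * b := by rw [← abs_mul]; exact neg_abs_le _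
  suffices dualPhi l0 l1 l2 τ ≤ l0 + l2 * s ^ 2 - (|τ| - l1) * s by
    simp only [penalty, if_neg hb]
    nlinarith [sq_abs b]
  have hm := Real.sqrt_nonneg (l0 * l2)
  have hm2 := Real.sq_sqrt (mul_nonneg hl0 hl2.le)
  unfold dualPhi
  split_ifs with hτ
  · rw [sub_le_comm, le_div_iff₀ (by positivity)]
    nlinarith [sq_nonneg (2 * l2 * s - (|τ| - l1))]
  · rcases le_or_gt (|τ| - l1) 0 with hu | hu
    · nlinarith [mul_nonneg hl2.le (sq_nonneg s)]
    · nlinarith [sq_nonneg (2 * l2 * s - (|τ| - l1))]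

theorem penalty_add_mul_hardThreshold (hl1 : 0 ≤ l1) (hl2 : 0 < l2) (τ : ℝ) :
    penalty l0 l1 l2 (hardThreshold l0 l1 l2 (-τ / (2 * l2)))
      + τ * hardThreshold l0 l1 l2 (-τ / (2 * l2)) = dualPhi l0 l1 l2 τ := by
  have h2l2 : 0 < 2 * l2 := by positivity
  have habs : |-τ / (2 * l2)| = |τ| / (2 * l2) := by rw [abs_div, abs_neg, abs_of_pos h2l2]
  unfold hardThreshold dualPhi
  simp only [habs, div_lt_div_iff_of_pos_right h2l2]
  split_ifs with hτ
  · set s := (|τ| - l1) / (2 * l2) with hs_def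
    have hs : 0 < s := div_pos (by linarith [Real.sqrt_nonneg (l0 * l2)]) h2l2
    have hτ0 : τ ≠ 0 := by
      rintro rfl
      linarith [abs_zero (α := ℝ) ▸ hτ, Real.sqrt_nonneg (l0 * l2)]
    suffices penalty l0 l1 l2 (Real.sign (-τ / (2 * l2)) * s)
        + τ * (Real.sign (-τ / (2 * l2)) * s) = l0 + l1 * s + l2 * s ^ 2 - |τ| * s by
      rw [← sub_div, this, hs_def]; field_simp; ring
    rcases hτ0.lt_or_gt with hneg | hpos
    · rw [Real.sign_of_pos (div_pos (neg_pos.mpr hneg) h2l2), abs_of_neg hneg, one_mul,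
        penalty, if_neg hs.ne', abs_of_pos hs]
      ring
    · rw [Real.sign_of_neg (div_neg_of_neg_of_pos (neg_neg_of_pos hpos) h2l2), abs_of_pos hpos,
        neg_one_mul, penalty, if_neg (neg_ne_zero.mpr hs.ne'), abs_neg, abs_of_pos hs]
      ring
  · simp [penalty]

theorem dualPhi_le_add_mul_sub (hl0 : 0 ≤ l0) (hl1 : 0 ≤ l1) (hl2 : 0 < l2) (τ τ' : ℝ) :
    dualPhi l0 l1 l2 τ' ≤
      dualPhi l0 l1 l2 τ + hardThreshold l0 l1 l2 (-τ / (2 * l2)) * (τ' - τ) := by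
  rw [← penalty_add_mul_hardThreshold hl1 hl2 τ]
  set b := hardThreshold l0 l1 l2 (-τ / (2 * l2))
  exact (dualPhi_le_penalty_add_mul hl0 hl2 τ' b).trans_eq (by ring)

end L0L1L2

theorem statement_17_general (l0 l1 l2 : ℝ) (hl0 : 0 < l0) (hl1 : 0 < l1) (hl2 : 0 < l2)
    (n p : ℕ) (X : Matrix (Fin n) (Fin p) ℝ) (y : Fin n → ℝ)
    (Φ : ℝ → ℝ)
    (hΦ : ∀ t : ℝ, Φ t =
      if 2 * Real.sqrt (l0 * l2) + l1 < |t| then l0 - (|t| - l1) ^ 2 / (4 * l2)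
      else 0)
    (B : ℝ → ℝ)
    (hB : ∀ η : ℝ, B η =
      if (2 * Real.sqrt (l0 * l2) + l1) / (2 * l2) < |η| then
        Real.sign η * (|η| - l1 / (2 * l2))
      else 0)
    (D : (Fin n → ℝ) → ℝ)
    (hD : ∀ α : Fin n → ℝ, D α =
      -(1 / 2) * (∑ i, (α i) ^ 2) - (∑ i, y i * α i)
        + ∑ j, Φ (∑ i, X i j * α i))
    (α : Fin n → ℝ)
    (η : Fin p → ℝ)
    (hη : ∀ j, η j = -(∑ i, X i j * α i) / (2 * l2))
    (β : Fin p → ℝ)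
    (hβ : ∀ j, β j = B (η j)) :
    ∀ α' : Fin n → ℝ,
      D α' ≤ D α +
        ∑ i, ((∑ j, X i j * β j) - y i - α i) * (α' i - α i) := by
  intro α'
  obtain rfl : Φ = L0L1L2.dualPhi l0 l1 l2 := funext hΦ
  obtain rfl : B = L0L1L2.hardThreshold l0 l1 l2 := funext hB
  have hdual : ∀ j, L0L1L2.dualPhi l0 l1 l2 (∑ i, X i j * α' i)
      ≤ L0L1L2.dualPhi l0 l1 l2 (∑ i, X i j * α i)
        + β j * (∑ i, X i j * α' i - ∑ i, X i j * α i) := fun j => by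
    rw [hβ, hη]
    exact L0L1L2.dualPhi_le_add_mul_sub hl0.le hl1.le hl2 _ _
  have hquad : ∀ i, -(1 / 2) * α' i ^ 2 - y i * α' i
      ≤ -(1 / 2) * α i ^ 2 - y i * α i + (-α i - y i) * (α' i - α i) := fun i => by
    nlinarith [sq_nonneg (α' i - α i)]
  have hswap : ∑ j, β j * (∑ i, X i j * α' i - ∑ i, X i j * α i)
      = ∑ i, (∑ j, X i j * β j) * (α' i - α i) := by
    simp only [← sum_sub_distrib, ← mul_sub, mul_sum, sum_mul]
    rw [sum_comm]
    exact sum_congr rfl fun i _ => sum_congr rfl fun j _ => by ring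
  have hsum_dual := sum_le_sum fun j (_ : j ∈ univ) => hdual j
  have hsum_quad := sum_le_sum fun i (_ : i ∈ univ) => hquad i
  simp only [sum_add_distrib, sum_sub_distrib, ← mul_sum, hswap]
    at hsum_dual hsum_quad
  have hsplit : ∑ i, ((∑ j, X i j * β j) - y i - α i) * (α' i - α i)
      = ∑ i, (∑ j, X i j * β j) * (α' i - α i) + ∑ i, (-α i - y i) * (α' i - α i) := by
    rw [← sum_add_distrib]
    exact sum_congr rfl fun i _ => by ring
  rw [hD, hD, hsplit]
  linarith

/-- (Supergradient of the square-loss dual.) If |η_j(α)| ≠ η₀ for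
every j and β(α)_j = 𝔅(η_j(α)), then X·β(α) − y − α is a supergradient of D at α:
for every α′, D(α′) ≤ D(α) + ⟨X·β(α) − y − α, α′ − α⟩. -/
theorem statement_17 (l0 l1 l2 : ℝ) (hl0 : 0 < l0) (hl1 : 0 < l1) (hl2 : 0 < l2)
    (n p : ℕ) (X : Matrix (Fin n) (Fin p) ℝ) (y : Fin n → ℝ)
    (Φ : ℝ → ℝ)
    (hΦ : ∀ t : ℝ, Φ t =
      if 2 * Real.sqrt (l0 * l2) + l1 < |t| then l0 - (|t| - l1) ^ 2 / (4 * l2)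
      else 0)
    (B : ℝ → ℝ)
    (hB : ∀ η : ℝ, B η =
      if (2 * Real.sqrt (l0 * l2) + l1) / (2 * l2) < |η| then
        Real.sign η * (|η| - l1 / (2 * l2))
      else 0)
    (D : (Fin n → ℝ) → ℝ)
    (hD : ∀ α : Fin n → ℝ, D α =
      -(1 / 2) * (∑ i, (α i) ^ 2) - (∑ i, y i * α i)
        + ∑ j, Φ (∑ i, X i j * α i))
    (α : Fin n → ℝ)
    (η : Fin p → ℝ)
    (hη : ∀ j, η j = -(∑ i, X i j * α i) / (2 * l2))
    (hne : ∀ j, |η j| ≠ (2 * Real.sqrt (l0 * l2) + l1) / (2 * l2))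
    (β : Fin p → ℝ)
    (hβ : ∀ j, β j = B (η j)) :
    ∀ α' : Fin n → ℝ,
      D α' ≤ D α +
        ∑ i, ((∑ j, X i j * β j) - y i - α i) * (α' i - α i) :=
  statement_17_general l0 l1 l2 hl0 hl1 hl2 n p X y Φ hΦ B hB D hD α η hη β hβ
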